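/- arXiv:1705.05408 — 5 statements merged into one kernel-verified Lean document; each statement's English description precedes it below -/
import Mathlib

section
/- For $\mu=(D,F)\in\Lambda=\{(D,F): F>1,\ D<-1/2,\ D+F>0\}$, the quadratic $q_\mu(x)=ax^2+bx+c$ with $a=\tfrac{D}{2(1-F)}$, $b=\tfrac{D-F+1}{(1-F)(1-2F)}$, $c=\tfrac{F-D-1}{2F(1-F)(1-2F)}$ satisfies $a>0$, $b^2-4ac>0$, and its two real roots $p_1=\tfrac{-b-\sqrt{b^2-4ac}}{2a}$ and $p_2=\tfrac{-b+\sqrt{b^2-4ac}}{2a}$ satisfy $0<p_1<p_2$. -/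
open Real

noncomputable def aQ (D F : ℝ) : ℝ := D/(2*(1-F))
noncomputable def bQ (D F : ℝ) : ℝ := (D-F+1)/((1-F)*(1-2*F))
noncomputable def cQ (D F : ℝ) : ℝ := (F-D-1)/(2*F*(1-F)*(1-2*F))
noncomputable def discQ (D F : ℝ) : ℝ := (bQ D F)^2 - 4*(aQ D F)*(cQ D F)
noncomputable def p1Q (D F : ℝ) : ℝ := (-(bQ D F) - Real.sqrt (discQ D F))/(2*(aQ D F))
noncomputable def p2Q (D F : ℝ) : ℝ := (-(bQ D F) + Real.sqrt (discQ D F))/(2*(aQ D F))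

/-!
On `Λ` the coefficients satisfy `a > 0`, `b < 0`, `c > 0`, so `√(b² - 4ac) < -b` and the smaller
root of `q_μ` is positive. The discriminant factors as
`(F - D - 1)(F - 1)(F + D) / (F ((1 - F)(1 - 2F))²)`, and each factor is positive on `Λ`.
-/

section Quadratic

variable {a b c : ℝ}

theorem neg_sub_sqrt_discrim_div_pos (ha : 0 < a) (hb : b < 0) (hc : 0 < c) :
    0 < (-b - √(discrim a b c)) / (2 * a) := by
  have hsqrt : √(discrim a b c) < -b := by
    rw [Real.sqrt_lt' (by linarith), discrim]
    nlinarith [mul_pos ha hc]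
  exact div_pos (by linarith) (by linarith)

theorem neg_sub_sqrt_div_lt_neg_add_sqrt_div {d : ℝ} (ha : 0 < a) (hd : 0 < d) :
    (-b - √d) / (2 * a) < (-b + √d) / (2 * a) := by
  have := Real.sqrt_pos.mpr hd
  gcongr
  linarith

end Quadratic

section Coefficients

variable {D F : ℝ}

theorem aQ_pos (hF : 1 < F) (hD : D < 0) : 0 < aQ D F :=
  div_pos_of_neg_of_neg hD (by linarith)

theorem bQ_neg (hF : 1 < F) (hD : D < 0) : bQ D F < 0 :=
  div_neg_of_neg_of_pos (by linarith) (mul_pos_of_neg_of_neg (by linarith) (by linarith))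

theorem cQ_pos (hF : 1 < F) (hD : D < 0) : 0 < cQ D F := by
  have hden : 0 < (1 - F) * (1 - 2 * F) := mul_pos_of_neg_of_neg (by linarith) (by linarith)
  exact div_pos (by linarith) (by rw [mul_assoc]; exact mul_pos (by linarith) hden)

theorem discQ_eq (hF₀ : F ≠ 0) (hF₁ : 1 - F ≠ 0) :
    discQ D F = (F - D - 1) * (F - 1) * (F + D) / (F * ((1 - F) * (1 - 2 * F)) ^ 2) := by
  unfold discQ aQ bQ cQ
  field_simp
  ring

theorem discQ_pos (hF : 1 < F) (hD : D < 0) (hDF : 0 < D + F) : 0 < discQ D F := by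
  rw [discQ_eq (by linarith) (by linarith)]
  have hden : 0 < (1 - F) * (1 - 2 * F) := mul_pos_of_neg_of_neg (by linarith) (by linarith)
  exact div_pos (mul_pos (mul_pos (by linarith) (by linarith)) (by linarith))
    (mul_pos (by linarith) (pow_pos hden 2))

end Coefficients

/-- For `(D,F) ∈ Λ`, the quadratic `q_μ` has positive leading coefficient, positive
discriminant and its two roots satisfy `0 < p₁ < p₂`. -/
theorem roots_of_qmu (D F : ℝ) (hF : 1 < F) (hD : D < -(1/2)) (hDF : 0 < D + F) :
    0 < aQ D F ∧ 0 < discQ D F ∧ 0 < p1Q D F ∧ p1Q D F < p2Q D F := by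
  have hD₀ : D < 0 := by linarith
  have ha := aQ_pos hF hD₀
  have hdisc := discQ_pos hF hD₀ hDF
  exact ⟨ha, hdisc, neg_sub_sqrt_discrim_div_pos ha (bQ_neg hF hD₀) (cQ_pos hF hD₀),
    neg_sub_sqrt_div_lt_neg_add_sqrt_div ha hdisc⟩
end

section
/- Fix $\mu=(D,F)\in\Lambda$ and let $\phi(z)=\tfrac{z^{-F}-1}{F}$ for $z>0$. Then the coordinate change $(u,v)=(\phi(1-x),(1-x)^{-F}y)$, defined for $x<1$, transforms the Loud system $\dot x=-y+xy$, $\dot y=x+Dx^2+Fy^2$ into the potential system $\dot u=-v$, $\dot v=(Fu+1)\bigl((Fu+1)^{-1/F}-1\bigr)\bigl(D(Fu+1)^{-1/F}-D-1\bigr)$. -/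
open Real

/-!
Along the Loud flow the weight `w = 1 - x` has logarithmic derivative `y`, so `w ^ (-F)` has
logarithmic derivative `-F y`; this gives `u̇ = -v` at once. Since `F u + 1 = w ^ (-F)`, the
potential system's right-hand side is `w ^ (-F) (w - 1) (D w - D - 1) = w ^ (-F) x (1 + D x)`,
which is what the product rule gives for `v = w ^ (-F) y`: the `F y²` terms cancel.
-/

theorem HasDerivAt.rpow_const_of_logDeriv {w : ℝ → ℝ} {c t : ℝ} (p : ℝ)
    (hw : HasDerivAt w (c * w t) t) (hwt : w t ≠ 0) :
    HasDerivAt (fun s => w s ^ p) (p * c * w t ^ p) t := by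
  refine (hw.rpow_const (Or.inl hwt)).congr_deriv ?_
  rw [rpow_sub_one hwt]
  field_simp

theorem mul_div_sub_one_add_one {K : Type*} [Field K] {F : K} (hF : F ≠ 0) (a : K) :
    F * ((a - 1) / F) + 1 = a := by
  field_simp
  ring

theorem Real.rpow_neg_rpow_neg_one_div {z : ℝ} (hz : 0 ≤ z) {F : ℝ} (hF : F ≠ 0) :
    (z ^ (-F)) ^ (-(1 / F)) = z := by
  rw [show -(1 / F) = (-F)⁻¹ by field_simp]
  exact rpow_rpow_inv hz (neg_ne_zero.mpr hF)

theorem loud_to_potential_general (D F : ℝ) (hF : 1 < F)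
    (x y : ℝ → ℝ)
    (hx : ∀ t, HasDerivAt x (-(y t) + x t * y t) t)
    (hy : ∀ t, HasDerivAt y (x t + D * (x t)^2 + F * (y t)^2) t)
    (hlt : ∀ t, x t < 1) :
    (∀ t, HasDerivAt (fun s => ((1 - x s) ^ (-F) - 1) / F)
        (-((1 - x t) ^ (-F) * y t)) t)
    ∧ (∀ t, HasDerivAt (fun s => (1 - x s) ^ (-F) * y s)
        ((F * (((1 - x t) ^ (-F) - 1) / F) + 1)
          * ((F * (((1 - x t) ^ (-F) - 1) / F) + 1) ^ (-(1/F)) - 1)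
          * (D * (F * (((1 - x t) ^ (-F) - 1) / F) + 1) ^ (-(1/F)) - D - 1)) t) := by
  have hF0 : F ≠ 0 := by linarith
  have hw_pos (t : ℝ) : 0 < 1 - x t := sub_pos.mpr (hlt t)
  have hw (t : ℝ) : HasDerivAt (fun s => 1 - x s) (y t * (1 - x t)) t :=
    ((hx t).const_sub 1).congr_deriv (by ring)
  have hP (t : ℝ) : HasDerivAt (fun s => (1 - x s) ^ (-F)) (-F * y t * (1 - x t) ^ (-F)) t :=
    (hw t).rpow_const_of_logDeriv (-F) (hw_pos t).ne'
  refine ⟨fun t => (((hP t).sub_const 1).div_const F).congr_deriv ?_, fun t => ?_⟩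
  · field_simp
  · rw [mul_div_sub_one_add_one hF0, rpow_neg_rpow_neg_one_div (hw_pos t).le hF0]
    exact ((hP t).mul (hy t)).congr_deriv (by ring)

/-- The coordinate change `(u,v) = (φ(1-x), (1-x)^(-F) y)`, `φ(z) = (z^(-F)-1)/F`,
transforms the Loud system `ẋ = -y+xy, ẏ = x+Dx²+Fy²` (for solutions staying in `x < 1`)
into the potential system
`u̇ = -v, v̇ = (Fu+1)((Fu+1)^(-1/F)-1)(D(Fu+1)^(-1/F)-D-1)`. -/
theorem loud_to_potential (D F : ℝ) (hF : 1 < F) (hD : D < -(1/2)) (hDF : 0 < D + F)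
    (x y : ℝ → ℝ)
    (hx : ∀ t, HasDerivAt x (-(y t) + x t * y t) t)
    (hy : ∀ t, HasDerivAt y (x t + D * (x t)^2 + F * (y t)^2) t)
    (hlt : ∀ t, x t < 1) :
    (∀ t, HasDerivAt (fun s => ((1 - x s) ^ (-F) - 1) / F)
        (-((1 - x t) ^ (-F) * y t)) t)
    ∧ (∀ t, HasDerivAt (fun s => (1 - x s) ^ (-F) * y s)
        ((F * (((1 - x t) ^ (-F) - 1) / F) + 1)
          * ((F * (((1 - x t) ^ (-F) - 1) / F) + 1) ^ (-(1/F)) - 1)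
          * (D * (F * (((1 - x t) ^ (-F) - 1) / F) + 1) ^ (-(1/F)) - D - 1)) t) :=
  loud_to_potential_general D F hF x y hx hy hlt
end

section
/- Let $\mu=(D,F)\in\Lambda$ and let $V_\mu$, $h_0(\mu)=\tfrac{F-D-1}{2F(F-1)(2F-1)}$ be as above. Then $\lim_{u\to(-1/F)^+}\ \bigl(h_0(\mu)-V_\mu(u)\bigr)\,(Fu+1)^{\frac{2}{F}-2}=\tfrac{D}{2-2F}$, and this limit is nonzero. -/
open Real Filter Topology

/-! Writing `w = Fu + 1` and `t = w^(1/F)`, we have `z = t⁻¹` and `z^(-2F) = w²`, so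
`(h₀ - V_μ(u)) w^(2/F - 2) = D/(2-2F) + (1+2D)/(2F-1) t - (D+1)/(2F) t²`, a polynomial in `t`;
and `t → 0` as `u → (-1/F)⁺`. -/

theorem rpow_neg_inv_rpow_mul_quadratic_mul_rpow {w F : ℝ} (hw : 0 < w) (hF : F ≠ 0)
    (a b c : ℝ) :
    (w ^ (-(1/F))) ^ (-(2*F)) * (a * (w ^ (-(1/F)))^2 + b * w ^ (-(1/F)) - c) * w ^ (2/F - 2)
      = a + b * w ^ (1/F) - c * (w ^ (1/F))^2 := by
  have ht : 0 < w ^ (1/F) := rpow_pos_of_pos hw _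
  have hz : w ^ (-(1/F)) = (w ^ (1/F))⁻¹ := rpow_neg hw.le _
  have hzpow : (w ^ (-(1/F))) ^ (-(2*F)) = w ^ 2 := by
    rw [← rpow_mul hw.le, show -(1/F) * -(2*F) = (2 : ℕ) by field_simp; norm_num, rpow_natCast]
  have hsq : w ^ (2/F) = (w ^ (1/F))^2 := by
    rw [← rpow_natCast, ← rpow_mul hw.le]; ring_nf
  rw [hzpow, hz, rpow_sub hw, rpow_two, hsq]
  field_simp

theorem tendsto_mul_add_one_rpow_inv_nhdsGT {F : ℝ} (hF : 0 < F) :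
    Tendsto (fun u => (F*u+1) ^ (1/F)) (𝓝[>] (-1/F)) (𝓝 0) := by
  have hcont : Continuous (fun u : ℝ => (F*u+1) ^ (1/F)) :=
    (continuous_rpow_const (by positivity)).comp (by fun_prop)
  have h := hcont.tendsto (-1/F)
  rw [show F * (-1/F) + 1 = 0 by field_simp; ring, zero_rpow (by positivity)] at h
  exact h.mono_left nhdsWithin_le_nhds

theorem quantifier_h0_minus_V_left_general (D F : ℝ) (hF : 1 < F) (hD : D < -(1/2))
    (V : ℝ → ℝ)
    (hV : ∀ u, -1/F < u →
      (F-D-1)/(2*F*(F-1)*(2*F-1)) - V u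
        = ((F*u+1) ^ (-(1/F))) ^ (-(2*F)) *
            (D/(2-2*F) * ((F*u+1) ^ (-(1/F)))^2
              + (1+2*D)/(2*F-1) * ((F*u+1) ^ (-(1/F))) - (D+1)/(2*F))) :
    Tendsto (fun u => ((F-D-1)/(2*F*(F-1)*(2*F-1)) - V u) * (F*u+1) ^ (2/F - 2))
      (𝓝[>] (-1/F)) (𝓝 (D/(2-2*F)))
    ∧ D/(2-2*F) ≠ 0 := by
  have hF0 : 0 < F := by linarith
  set p : ℝ → ℝ := fun t => D/(2-2*F) + (1+2*D)/(2*F-1) * t - (D+1)/(2*F) * t^2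
  have heq : (fun u => p ((F*u+1) ^ (1/F))) =ᶠ[𝓝[>] (-1/F)]
      fun u => ((F-D-1)/(2*F*(F-1)*(2*F-1)) - V u) * (F*u+1) ^ (2/F - 2) := by
    filter_upwards [self_mem_nhdsWithin] with u (hu : -1/F < u)
    have hw : 0 < F*u+1 := by
      have := (div_lt_iff₀ hF0).mp hu
      linarith
    rw [hV u hu, rpow_neg_inv_rpow_mul_quadratic_mul_rpow hw hF0.ne']
  have hp : Tendsto p (𝓝 0) (𝓝 (D/(2-2*F))) := by
    simpa [p] using (show Continuous p by fun_prop).tendsto 0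
  refine ⟨(hp.comp (tendsto_mul_add_one_rpow_inv_nhdsGT hF0)).congr' heq, ?_⟩
  exact div_ne_zero (by linarith) (by linarith)

/-- Quantifier of `h₀(μ) - V_μ` at the left endpoint `u = -1/F`:
`(h₀(μ) - V_μ(u)) (Fu+1)^(2/F-2) → D/(2-2F) ≠ 0` as `u → (-1/F)⁺`. -/
theorem quantifier_h0_minus_V_left (D F : ℝ) (hF : 1 < F) (hD : D < -(1/2))
    (hDF : 0 < D + F) (V : ℝ → ℝ)
    (hV : ∀ u, -1/F < u →
      (F-D-1)/(2*F*(F-1)*(2*F-1)) - V u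
        = ((F*u+1) ^ (-(1/F))) ^ (-(2*F)) *
            (D/(2-2*F) * ((F*u+1) ^ (-(1/F)))^2
              + (1+2*D)/(2*F-1) * ((F*u+1) ^ (-(1/F))) - (D+1)/(2*F))) :
    Tendsto (fun u => ((F-D-1)/(2*F*(F-1)*(2*F-1)) - V u) * (F*u+1) ^ (2/F - 2))
      (𝓝[>] (-1/F)) (𝓝 (D/(2-2*F)))
    ∧ D/(2-2*F) ≠ 0 :=
  quantifier_h0_minus_V_left_general D F hF hD V hV
end

section
/- For $F\in(1,3/2)$, one has $F^F(F-1)^{1-F}+2-3F>0$. -/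
/-!
With `a = F - 1` one has `F ^ F * (F - 1) ^ (1 - F) = F * exp (a * log (1 + a⁻¹))`. Bounding
`log (1 + a⁻¹)` below by the first two terms of its series in `1 / (2a + 1)`, and `exp` below by
its quadratic Taylor polynomial, reduces the claim to a polynomial inequality in `a ∈ (0, 1/2)`.
-/

open Real

theorem le_log_one_add_inv {a : ℝ} (ha : 0 < a) :
    2 * ((2 * a + 1)⁻¹ + (2 * a + 1)⁻¹ ^ 3 / 3) ≤ log (1 + a⁻¹) :=
  calc 2 * ((2 * a + 1)⁻¹ + (2 * a + 1)⁻¹ ^ 3 / 3)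
      = ∑ k ∈ Finset.range 2, 2 * (1 / (2 * k + 1)) * (1 / (2 * a + 1)) ^ (2 * k + 1) := by
        norm_num [Finset.sum_range_succ]; ring
    _ ≤ log (1 + a⁻¹) :=
        sum_le_hasSum _ (fun k _ => by positivity) (hasSum_log_one_add_inv ha)

theorem rpow_self_mul_sub_one_rpow_one_sub {F : ℝ} (hF : 1 < F) :
    F ^ F * (F - 1) ^ (1 - F) = F * exp ((F - 1) * log (1 + (F - 1)⁻¹)) := by
  have h0 : 0 < F := by linarith
  have h1 : 0 < F - 1 := by linarith
  calc F ^ F * (F - 1) ^ (1 - F) = exp (log F + (F - 1) * log (1 + (F - 1)⁻¹)) := by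
        rw [rpow_def_of_pos h0, rpow_def_of_pos h1, ← exp_add,
          show 1 + (F - 1)⁻¹ = F / (F - 1) by field_simp; ring, log_div h0.ne' h1.ne']
        ring_nf
    _ = F * exp ((F - 1) * log (1 + (F - 1)⁻¹)) := by rw [exp_add, exp_log h0]

theorem one_add_three_mul_lt_of_le {a y : ℝ} (ha : 0 < a) (ha2 : a < 1 / 2)
    (hy : a * (2 * ((2 * a + 1)⁻¹ + (2 * a + 1)⁻¹ ^ 3 / 3)) ≤ y) :
    1 + 3 * a < (1 + a) * (1 + y + y ^ 2 / 2) := by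
  set y₀ := a * (2 * ((2 * a + 1)⁻¹ + (2 * a + 1)⁻¹ ^ 3 / 3))
  have hy₀ : 0 ≤ y₀ := by positivity
  have hpoly : 1 + 3 * a < (1 + a) * (1 + y₀ + y₀ ^ 2 / 2) := by
    have hpos : 0 < 2 * a + 1 := by linarith
    have h : ∀ k : ℕ, 0 < a ^ k * (1 - 2 * a) := fun k => mul_pos (pow_pos ha k) (by linarith)
    simp only [y₀]
    field_simp
    -- up to a positive factor the difference is `c(12 + 56c + 7c²) + c³(1 - c)(69 + 87c + 45c² + 9c³)`
    -- with `c = 2a`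
    nlinarith [h 3, h 4, h 5, h 6, pow_pos ha 2, pow_pos ha 3]
  have hmono : 1 + y₀ + y₀ ^ 2 / 2 ≤ 1 + y + y ^ 2 / 2 := by nlinarith
  exact hpoly.trans_le (mul_le_mul_of_nonneg_left hmono (by linarith))

/-- For `F ∈ (1,3/2)`, one has `F^F (F-1)^(1-F) + 2 - 3F > 0`. -/
theorem key_inequality (F : ℝ) (hF : 1 < F) (hF2 : F < 3/2) :
    0 < F ^ F * (F - 1) ^ (1 - F) + 2 - 3*F := by
  have ha : 0 < F - 1 := by linarith
  set y := (F - 1) * log (1 + (F - 1)⁻¹)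
  have hy : 0 ≤ y := mul_nonneg ha.le (log_nonneg (by simp [ha.le]))
  suffices 3 * F - 2 < F * exp y by
    rw [rpow_self_mul_sub_one_rpow_one_sub hF]; linarith
  calc 3 * F - 2 = 1 + 3 * (F - 1) := by ring
    _ < (1 + (F - 1)) * (1 + y + y ^ 2 / 2) :=
        one_add_three_mul_lt_of_le ha (by linarith)
          (mul_le_mul_of_nonneg_left (le_log_one_add_inv ha) ha.le)
    _ ≤ F * exp y := by
        rw [add_sub_cancel]
        exact mul_le_mul_of_nonneg_left (quadratic_le_exp_of_nonneg hy) (by linarith)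
end

section
/- For $\mu=(D,F)\in\Lambda$ with $F\neq 2$, define $\mathscr{R}_\mu=\tfrac{(V_\mu')^2-2V_\mu V_\mu''}{(V_\mu')^3}$. Then $\lim_{u\to(-1/F)^+}\bigl(h_0(\mu)-V_\mu(u)\bigr)\mathscr{R}_\mu(u)\,(Fu+1)^{1-\frac{2}{F}}=\tfrac{(F-2)h_0(\mu)}{D(F-1)}$, and this limit is nonzero. -/
/-!
Write `t = F u + 1` and `s = t ^ (1 / F)`. Integrating `V'` explicitly (the constant is fixed
by `V 0 = 0`) gives `h₀ - V = t ^ (2 - 2/F) Q(s)`, `V' = t ^ (1 - 2/F) P(s)` and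
`V'' = t ^ (-2/F) R(s)` for quadratics `P, Q, R`, so the expression equals
`Q(s) (y (P(s)² + 2 Q(s) R(s)) - 2 h₀ R(s)) / P(s)³` with `y = t ^ (2 - 2/F)`.
Since `F > 1`, both `y` and `s` tend to `0` as `u → -1/F⁺`, and the limit is
`Q(0) (-2 h₀ R(0)) / P(0)³ = (F - 2) h₀ / (D (F - 1))`, nonzero because `h₀ > 0`.
-/

open Real Filter Topology Set

theorem rpow_sub_div_natCast {t : ℝ} (ht : 0 < t) (F a : ℝ) (k : ℕ) :
    t ^ (a - k / F) = t ^ a / (t ^ (1 / F)) ^ k := by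
  rw [rpow_sub ht, ← rpow_natCast, ← rpow_mul ht.le, one_div_mul_eq_div]

theorem hasDerivAt_affine_rpow (F p : ℝ) {u : ℝ} (ht : F * u + 1 ≠ 0) :
    HasDerivAt (fun u => (F * u + 1) ^ p) (p * (F * u + 1) ^ (p - 1) * F) u :=
  (((hasDerivAt_id' u).const_mul F).add_const 1).rpow_const (Or.inl ht) |>.congr_deriv (by ring)

theorem tendsto_affine_rpow_nhdsGT {F p : ℝ} (hF : 0 < F) (hp : 0 < p) :
    Tendsto (fun u => (F * u + 1) ^ p) (𝓝[>] (-1 / F)) (𝓝 0) := by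
  have hc : Continuous (fun u => (F * u + 1) ^ p) :=
    (continuous_const.mul continuous_id |>.add continuous_const).rpow_const
      fun _ => Or.inr hp.le
  have h := hc.tendsto (-1 / F)
  rw [show F * (-1 / F) + 1 = 0 by field_simp; ring, zero_rpow hp.ne'] at h
  exact h.mono_left nhdsWithin_le_nhds

theorem affine_pos {F u : ℝ} (hF : 0 < F) (hu : -1 / F < u) : 0 < F * u + 1 := by
  rw [div_lt_iff₀' hF] at hu
  linarith

noncomputable section

namespace Potential

variable (D F : ℝ)

def h₀ : ℝ := (F - D - 1) / (2 * F * (F - 1) * (2 * F - 1))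

def V (u : ℝ) : ℝ :=
  h₀ D F + D / (2 * (F - 1)) * (F * u + 1) ^ (2 - 2 / F)
    - (2 * D + 1) / (2 * F - 1) * (F * u + 1) ^ (2 - 1 / F)
    + (D + 1) / (2 * F) * (F * u + 1) ^ (2 : ℝ)

def V' (u : ℝ) : ℝ :=
  (F * u + 1) * ((F * u + 1) ^ (-(1 / F)) - 1) * (D * (F * u + 1) ^ (-(1 / F)) - D - 1)

def P (s : ℝ) : ℝ := D - (2 * D + 1) * s + (D + 1) * s ^ 2

def Q (s : ℝ) : ℝ :=
  -D / (2 * (F - 1)) + (2 * D + 1) / (2 * F - 1) * s - (D + 1) / (2 * F) * s ^ 2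

def R (s : ℝ) : ℝ := D * (F - 2) - (2 * D + 1) * (F - 1) * s + (D + 1) * F * s ^ 2

def reduced (y s : ℝ) : ℝ :=
  Q D F s * (y * (P D s ^ 2 + 2 * Q D F s * R D F s) - 2 * h₀ D F * R D F s) / P D s ^ 3

variable {D F} {u : ℝ}

theorem V'_eq_sum (ht : 0 < F * u + 1) :
    V' D F u = D * (F * u + 1) ^ (1 - 2 / F) - (2 * D + 1) * (F * u + 1) ^ (1 - 1 / F)
      + (D + 1) * (F * u + 1) := by
  rw [V', show (1 : ℝ) - 2 / F = 1 + -(1 / F) + -(1 / F) by ring,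
    show (1 : ℝ) - 1 / F = 1 + -(1 / F) by ring, rpow_add ht, rpow_add ht, rpow_one]
  ring

theorem hasDerivAt_V (hF : F ≠ 0) (hF1 : F - 1 ≠ 0) (hF2 : 2 * F - 1 ≠ 0)
    (ht : 0 < F * u + 1) : HasDerivAt (V D F) (V' D F u) u := by
  have h := (((hasDerivAt_affine_rpow F (2 - 2 / F) ht.ne').const_mul (D / (2 * (F - 1)))).sub
    ((hasDerivAt_affine_rpow F (2 - 1 / F) ht.ne').const_mul ((2 * D + 1) / (2 * F - 1)))).add
    ((hasDerivAt_affine_rpow F 2 ht.ne').const_mul ((D + 1) / (2 * F))) |>.const_add (h₀ D F)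
  refine (h.congr_of_eventuallyEq (.of_forall fun v => ?_)).congr_deriv ?_
  · simp only [V, Pi.add_apply, Pi.sub_apply]; ring
  · rw [V'_eq_sum ht, show (2 : ℝ) - 2 / F - 1 = 1 - 2 / F by ring,
      show (2 : ℝ) - 1 / F - 1 = 1 - 1 / F by ring, show (2 : ℝ) - 1 = 1 by ring, rpow_one]
    field_simp

theorem V_zero (hF : F ≠ 0) (hF1 : F - 1 ≠ 0) (hF2 : 2 * F - 1 ≠ 0) : V D F 0 = 0 := by
  simp only [V, h₀, mul_zero, zero_add, one_rpow, mul_one]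
  -- `field_simp` looks for the denominator `2 * F - 1` in the normal form `F * 2 - 1`
  have hF2' : F * 2 - 1 ≠ 0 := by rwa [mul_comm]
  field_simp
  ring

theorem V_eq (ht : 0 < F * u + 1) :
    V D F u = h₀ D F
      - (F * u + 1) ^ 2 / ((F * u + 1) ^ (1 / F)) ^ 2 * Q D F ((F * u + 1) ^ (1 / F)) := by
  have hs : (F * u + 1) ^ (1 / F) ≠ 0 := (rpow_pos_of_pos ht _).ne'
  rw [V, Q, show (2 : ℝ) - 2 / F = 2 - ((2 : ℕ) : ℝ) / F by norm_num,
    show (2 : ℝ) - 1 / F = 2 - ((1 : ℕ) : ℝ) / F by norm_num,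
    rpow_sub_div_natCast ht, rpow_sub_div_natCast ht, rpow_two]
  field_simp
  ring

theorem V'_eq (ht : 0 < F * u + 1) :
    V' D F u = (F * u + 1) / ((F * u + 1) ^ (1 / F)) ^ 2 * P D ((F * u + 1) ^ (1 / F)) := by
  have hs : (F * u + 1) ^ (1 / F) ≠ 0 := (rpow_pos_of_pos ht _).ne'
  rw [V', P, rpow_neg ht.le]
  field_simp
  ring

theorem hasDerivAt_V' (hF : F ≠ 0) (ht : 0 < F * u + 1) :
    HasDerivAt (V' D F) (R D F ((F * u + 1) ^ (1 / F)) / ((F * u + 1) ^ (1 / F)) ^ 2) u := by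
  have h := (((hasDerivAt_affine_rpow F (1 - 2 / F) ht.ne').const_mul D).sub
    ((hasDerivAt_affine_rpow F (1 - 1 / F) ht.ne').const_mul (2 * D + 1))).add
    ((hasDerivAt_affine_rpow F 1 ht.ne').const_mul (D + 1))
  have hV' : V' D F =ᶠ[𝓝 u] fun v => D * (F * v + 1) ^ (1 - 2 / F)
      - (2 * D + 1) * (F * v + 1) ^ (1 - 1 / F) + (D + 1) * (F * v + 1) ^ (1 : ℝ) := by
    have : IsOpen {v : ℝ | 0 < F * v + 1} := isOpen_lt continuous_const (by fun_prop)
    filter_upwards [this.mem_nhds ht] with v hv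
    rw [V'_eq_sum hv, rpow_one]
  refine (h.congr_of_eventuallyEq hV').congr_deriv ?_
  have hs : (F * u + 1) ^ (1 / F) ≠ 0 := (rpow_pos_of_pos ht _).ne'
  rw [R, show (1 : ℝ) - 2 / F - 1 = 0 - ((2 : ℕ) : ℝ) / F by push_cast; ring,
    show (1 : ℝ) - 1 / F - 1 = 0 - ((1 : ℕ) : ℝ) / F by push_cast; ring,
    rpow_sub_div_natCast ht, rpow_sub_div_natCast ht, sub_self, rpow_zero]
  field_simp

theorem reduced_eq_expr {t s : ℝ} (ht : t ≠ 0) (hs : s ≠ 0) (hP : P D s ≠ 0) :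
    reduced D F (t ^ 2 / s ^ 2) s
      = (h₀ D F - (h₀ D F - t ^ 2 / s ^ 2 * Q D F s))
        * (((t / s ^ 2 * P D s) ^ 2 - 2 * (h₀ D F - t ^ 2 / s ^ 2 * Q D F s) * (R D F s / s ^ 2))
          / (t / s ^ 2 * P D s) ^ 3) * (t / s ^ 2) := by
  rw [reduced]
  field_simp
  ring

theorem tendsto_reduced (hF : 1 < F) (hD : D ≠ 0) :
    Tendsto (fun u => reduced D F ((F * u + 1) ^ (2 - 2 / F)) ((F * u + 1) ^ (1 / F)))
      (𝓝[>] (-1 / F)) (𝓝 ((F - 2) * h₀ D F / (D * (F - 1)))) := by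
  have hF0 : 0 < F := by linarith
  have hy := tendsto_affine_rpow_nhdsGT hF0 (p := 2 - 2 / F) (by
    rw [sub_pos, div_lt_iff₀ hF0]; linarith)
  have hs := tendsto_affine_rpow_nhdsGT hF0 (p := 1 / F) (by positivity)
  have hc : ContinuousAt (fun p : ℝ × ℝ => reduced D F p.1 p.2) (0, 0) := by
    simp only [reduced, P, Q, R]
    fun_prop (disch := simpa)
  have hval : reduced D F 0 0 = (F - 2) * h₀ D F / (D * (F - 1)) := by
    have : F - 1 ≠ 0 := by linarith
    norm_num [reduced, P, Q, R]
    field_simp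
  rw [← hval]
  exact (hc.tendsto.comp (hy.prodMk_nhds hs) :)

theorem eqOn_V {W : ℝ → ℝ} (hF : 1 < F) (hW0 : W 0 = 0)
    (hW : ∀ u, -1 / F < u → HasDerivAt W (V' D F u) u) : EqOn W (V D F) (Ioi (-1 / F)) := by
  have hF0 : 0 < F := by linarith
  have hV : ∀ u ∈ Ioi (-1 / F), HasDerivAt (V D F) (V' D F u) u := fun u hu =>
    hasDerivAt_V hF0.ne' (by linarith) (by linarith) (affine_pos hF0 hu)
  have h0 : (0 : ℝ) ∈ Ioi (-1 / F) := by
    rw [mem_Ioi, neg_div]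
    exact neg_neg_of_pos (by positivity)
  exact isOpen_Ioi.eqOn_of_deriv_eq isPreconnected_Ioi
    (fun u hu => (hW u hu).differentiableAt.differentiableWithinAt)
    (fun u hu => (hV u hu).differentiableAt.differentiableWithinAt)
    (fun u hu => (hW u hu).deriv.trans (hV u hu).deriv.symm) h0
    (by rw [hW0, V_zero hF0.ne' (by linarith) (by linarith)])

theorem h₀_pos (hF : 1 < F) (hD : D < F - 1) : 0 < h₀ D F := by
  have : 0 < F - 1 := by linarith
  have : 0 < 2 * F - 1 := by linarith
  exact div_pos (by linarith) (by positivity)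

theorem eventually_P_ne_zero (hF : 0 < F) (hD : D ≠ 0) :
    ∀ᶠ u in 𝓝[>] (-1 / F), P D ((F * u + 1) ^ (1 / F)) ≠ 0 := by
  have hs := tendsto_affine_rpow_nhdsGT hF (p := 1 / F) (by positivity)
  have hc : Continuous (P D) := by unfold P; fun_prop
  refine (hc.tendsto 0 |>.comp hs).eventually_ne ?_
  simpa [P] using hD

theorem mul_R_quotient_eq_reduced (hF : 0 < F) (ht : 0 < F * u + 1)
    (hP : P D ((F * u + 1) ^ (1 / F)) ≠ 0) :
    (h₀ D F - V D F u) * ((V' D F u ^ 2 - 2 * V D F u * deriv (V' D F) u) / V' D F u ^ 3)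
      * (F * u + 1) ^ (1 - 2 / F)
      = reduced D F ((F * u + 1) ^ (2 - 2 / F)) ((F * u + 1) ^ (1 / F)) := by
  have hs : (F * u + 1) ^ (1 / F) ≠ 0 := (rpow_pos_of_pos ht _).ne'
  rw [(hasDerivAt_V' hF.ne' ht).deriv, V_eq ht, V'_eq ht,
    show (1 : ℝ) - 2 / F = 1 - ((2 : ℕ) : ℝ) / F by norm_num,
    show (2 : ℝ) - 2 / F = 2 - ((2 : ℕ) : ℝ) / F by norm_num,
    rpow_sub_div_natCast ht, rpow_sub_div_natCast ht, rpow_one, rpow_two,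
    reduced_eq_expr ht.ne' hs hP]

end Potential

end

open Potential in
theorem quantifier_R_left_general (D F : ℝ) (hF : 1 < F) (hFne : F ≠ 2) (hD : D < -(1/2))
    (V Vp : ℝ → ℝ) (hV0 : V 0 = 0)
    (hVp : ∀ u, -1/F < u →
      Vp u = (F*u+1) * ((F*u+1) ^ (-(1/F)) - 1) * (D * (F*u+1) ^ (-(1/F)) - D - 1))
    (hV : ∀ u, -1/F < u → HasDerivAt V (Vp u) u) :
    Tendsto (fun u =>
        ((F-D-1)/(2*F*(F-1)*(2*F-1)) - V u)
          * ((Vp u ^ 2 - 2 * V u * deriv Vp u) / (Vp u ^ 3))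
          * (F*u+1) ^ (1 - 2/F))
      (𝓝[>] (-1/F))
      (𝓝 ((F-2) * ((F-D-1)/(2*F*(F-1)*(2*F-1))) / (D*(F-1))))
    ∧ (F-2) * ((F-D-1)/(2*F*(F-1)*(2*F-1))) / (D*(F-1)) ≠ 0 := by
  have hF0 : 0 < F := by linarith
  have hD0 : D ≠ 0 := by linarith
  have hVp' : EqOn Vp (V' D F) (Ioi (-1 / F)) := hVp
  have hVeq : EqOn V (Potential.V D F) (Ioi (-1 / F)) :=
    eqOn_V hF hV0 fun u hu => hVp' hu ▸ hV u hu
  refine ⟨(tendsto_reduced hF hD0).congr' ?_, ?_⟩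
  · filter_upwards [self_mem_nhdsWithin, eventually_P_ne_zero hF0 hD0] with u hu hP
    have hVp_nhds : Vp =ᶠ[𝓝 u] V' D F :=
      eventually_of_mem (isOpen_Ioi.mem_nhds hu) hVp'
    rw [hVeq hu, hVp_nhds.eq_of_nhds, hVp_nhds.deriv_eq]
    exact (mul_R_quotient_eq_reduced hF0 (affine_pos hF0 hu) hP).symm
  · exact div_ne_zero (mul_ne_zero (sub_ne_zero.2 hFne) (h₀_pos hF (by linarith)).ne')
      (mul_ne_zero hD0 (by linarith))

/-- (Lemma 3.4(a) of the paper.) For `μ ∈ Λ` with `F ≠ 2`, with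
`ℛ_μ = ((V')² - 2VV'')/(V')³`, one has
`(h₀(μ) - V_μ(u)) ℛ_μ(u) (Fu+1)^(1-2/F) → (F-2)h₀(μ)/(D(F-1)) ≠ 0` as `u → (-1/F)⁺`. -/
theorem quantifier_R_left (D F : ℝ) (hF : 1 < F) (hFne : F ≠ 2) (hD : D < -(1/2))
    (hDF : 0 < D + F) (V Vp : ℝ → ℝ) (hV0 : V 0 = 0)
    (hVp : ∀ u, -1/F < u →
      Vp u = (F*u+1) * ((F*u+1) ^ (-(1/F)) - 1) * (D * (F*u+1) ^ (-(1/F)) - D - 1))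
    (hV : ∀ u, -1/F < u → HasDerivAt V (Vp u) u) :
    Tendsto (fun u =>
        ((F-D-1)/(2*F*(F-1)*(2*F-1)) - V u)
          * ((Vp u ^ 2 - 2 * V u * deriv Vp u) / (Vp u ^ 3))
          * (F*u+1) ^ (1 - 2/F))
      (𝓝[>] (-1/F))
      (𝓝 ((F-2) * ((F-D-1)/(2*F*(F-1)*(2*F-1))) / (D*(F-1))))
    ∧ (F-2) * ((F-D-1)/(2*F*(F-1)*(2*F-1))) / (D*(F-1)) ≠ 0 :=
  quantifier_R_left_general D F hF hFne hD V Vp hV0 hVp hV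
end
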